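/- arXiv:math-ph/0302013 — 3 statements merged into one kernel-verified Lean document; each statement's English description precedes it below -/
import Mathlib

section
/- For a finite spin system with Hamiltonian U(J,σ) = Σ_X J_X Φ_X(σ) where the coefficients J_X are independent centered Gaussian random variables with variances Δ_X², the quenched expectation Av[ω_J(J_X Φ_X)] equals Δ_X² · Av[ω_J(Φ_X²) − ω_J(Φ_X)²], and hence is nonnegative, where ω_J denotes the Gibbs state with weights e^{U(J,σ)} over a finite configuration space with an a priori probability measure. -/
/-!
Fix all couplings but `J_X`. Then `t ↦ ω(Φ_X)` at `J_X = t` is a bounded smooth function whose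
derivative is the truncated correlation `ω(Φ_X²) − ω(Φ_X)²` (differentiate numerator and
partition function of the Gibbs quotient). Gaussian integration by parts
`E[(t − m) f(t)] = v E[f'(t)]` in the coordinate `J_X`, followed by Fubini over the remaining
couplings, gives the identity; its right-hand side is nonnegative by Jensen's inequality
`ω(Φ_X)² ≤ ω(Φ_X²)`.
-/

open MeasureTheory ProbabilityTheory Real Function
open scoped NNReal

namespace ProbabilityTheory

variable {m : ℝ} {v : ℝ≥0}

lemma hasDerivAt_gaussianPDFReal (hv : v ≠ 0) (t : ℝ) :
    HasDerivAt (gaussianPDFReal m v) (-(t - m) / v * gaussianPDFReal m v t) t := by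
  rw [gaussianPDFReal_def]
  have h := ((((hasDerivAt_id' t).sub_const m).fun_pow 2).fun_neg.div_const
    (2 * (v : ℝ))).exp.const_mul (√(2 * π * v))⁻¹
  refine h.congr_deriv ?_
  have : (v : ℝ) ≠ 0 := by exact_mod_cast hv
  field_simp
  ring

lemma integrable_gaussianReal_iff (hv : v ≠ 0) {g : ℝ → ℝ} :
    Integrable g (gaussianReal m v) ↔ Integrable (fun t => gaussianPDFReal m v t • g t) := by
  rw [gaussianReal_of_var_ne_zero _ hv, integrable_withDensity_iff_integrable_smul'
    (measurable_gaussianPDF m v) (ae_of_all _ fun _ => gaussianPDF_lt_top)]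
  simp only [gaussianPDF, ENNReal.toReal_ofReal (gaussianPDFReal_nonneg m v _)]

theorem integral_sub_mul_gaussianReal {f f' : ℝ → ℝ} (hf : ∀ t, HasDerivAt f (f' t) t)
    {C : ℝ} (hC : ∀ t, |f t| ≤ C) (hf' : Integrable f' (gaussianReal m v)) :
    ∫ t, (t - m) * f t ∂gaussianReal m v = v * ∫ t, f' t ∂gaussianReal m v := by
  rcases eq_or_ne v 0 with rfl | hv
  · simp [gaussianReal_zero_var]
  have hfc : Continuous f := continuous_iff_continuousAt.2 fun t => (hf t).continuousAt
  have hlin : Integrable (fun t => (t - m) * f t) (gaussianReal m v) :=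
    (((memLp_id_gaussianReal 1).integrable le_rfl).sub (integrable_const m)).mul_bdd
      hfc.aestronglyMeasurable (ae_of_all _ hC)
  have hfi : Integrable f (gaussianReal m v) :=
    .of_bound hfc.aestronglyMeasurable C (ae_of_all _ hC)
  rw [integrable_gaussianReal_iff hv] at hlin hf' hfi
  have hv0 : (v : ℝ) ≠ 0 := by exact_mod_cast hv
  -- the density `p` satisfies `v p' = -(t - m) p`, so `∫ (t - m) f p = -v ∫ f p' = v ∫ f' p`
  have ibp := integral_mul_deriv_eq_deriv_mul_of_integrable (u := f)
    (v' := fun t => -(t - m) / v * gaussianPDFReal m v t) (fun t _ => hf t)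
    (fun t _ => hasDerivAt_gaussianPDFReal hv t) ?_ ?_ ?_
  · rw [integral_gaussianReal_eq_integral_smul hv, integral_gaussianReal_eq_integral_smul hv]
    simp_rw [smul_eq_mul, mul_comm (gaussianPDFReal m v _) (f' _)]
    simp_rw [show ∀ x, f x * (-(x - m) / v * gaussianPDFReal m v x)
      = -(v : ℝ)⁻¹ * (gaussianPDFReal m v x * ((x - m) * f x)) from fun x => by ring] at ibp
    rwa [integral_const_mul, neg_mul, neg_inj, inv_mul_eq_iff_eq_mul₀ hv0] at ibp
  · refine (hlin.const_mul (-(v : ℝ)⁻¹)).congr (ae_of_all _ fun x => ?_)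
    simp only [Pi.mul_apply, smul_eq_mul]
    ring
  · exact hf'.congr (ae_of_all _ fun x => mul_comm _ _)
  · exact hfi.congr (ae_of_all _ fun x => mul_comm _ _)

end ProbabilityTheory

namespace MeasureTheory

variable {ι : Type*} [Fintype ι] [DecidableEq ι] {α : ι → Type*} [∀ i, MeasurableSpace (α i)]
  (μ : ∀ i, Measure (α i)) [∀ i, IsProbabilityMeasure (μ i)]

theorem measurePreserving_update (i : ι) :
    MeasurePreserving (fun p : (∀ j, α j) × α i => update p.1 i p.2)
      ((Measure.pi μ).prod (μ i)) (Measure.pi μ) where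
  measurable := measurable_update'
  map_eq := by
    refine (Measure.pi_eq fun s hs => ?_).symm
    have hpre : (fun p : (∀ j, α j) × α i => update p.1 i p.2) ⁻¹' Set.univ.pi s
        = Set.univ.pi (update s i Set.univ) ×ˢ s i := by
      ext ⟨x, y⟩
      simp only [Set.mem_preimage, Set.mem_pi, Set.mem_univ, true_implies, Set.mem_prod]
      constructor
      · intro h
        refine ⟨fun j => ?_, by simpa using h i⟩
        rcases eq_or_ne j i with rfl | hj
        · simp
        · simpa [hj] using h j
      · rintro ⟨hx, hy⟩ j
        rcases eq_or_ne j i with rfl | hj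
        · simpa using hy
        · simpa [hj] using hx j
    rw [Measure.map_apply measurable_update' (MeasurableSet.univ_pi hs), hpre,
      Measure.prod_prod, Measure.pi_pi]
    simp_rw [apply_update (fun j => μ j), measure_univ]
    rw [Finset.prod_update_of_mem (Finset.mem_univ i), one_mul, mul_comm]
    exact (Finset.prod_eq_mul_prod_sdiff_singleton_of_mem (Finset.mem_univ i)
      (fun j => μ j (s j))).symm

theorem integral_pi_eq_integral_integral_update {E : Type*} [NormedAddCommGroup E]
    [NormedSpace ℝ E] (i : ι) {f : (∀ j, α j) → E} (hf : Integrable f (Measure.pi μ)) :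
    ∫ x, f x ∂Measure.pi μ = ∫ x, ∫ y, f (update x i y) ∂μ i ∂Measure.pi μ := by
  have h := measurePreserving_update μ i
  calc ∫ x, f x ∂Measure.pi μ
      = ∫ p, f (update p.1 i p.2) ∂(Measure.pi μ).prod (μ i) := by
        conv_lhs => rw [← h.map_eq]
        exact integral_map h.measurable.aemeasurable
          (by rw [h.map_eq]; exact hf.aestronglyMeasurable)
    _ = _ := integral_prod _ ((h.integrable_comp hf.aestronglyMeasurable).2 hf)

end MeasureTheory

section Gibbs

variable {S : Type*} [Fintype S]

noncomputable def gibbs (P H g : S → ℝ) : ℝ :=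
  (∑ σ, P σ * g σ * exp (H σ)) / ∑ σ, P σ * exp (H σ)

noncomputable def gibbsVariance (P H φ : S → ℝ) : ℝ :=
  gibbs P H (fun σ => φ σ ^ 2) - gibbs P H φ ^ 2

variable [Nonempty S] {P : S → ℝ}

lemma sum_mul_exp_pos (hP : ∀ σ, 0 < P σ) (H : S → ℝ) : 0 < ∑ σ, P σ * exp (H σ) :=
  Finset.sum_pos (fun σ _ => mul_pos (hP σ) (exp_pos _)) Finset.univ_nonempty

lemma continuous_gibbs (hP : ∀ σ, 0 < P σ) (g : S → ℝ) : Continuous fun H => gibbs P H g :=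
  Continuous.div (by fun_prop) (by fun_prop) fun H => (sum_mul_exp_pos hP H).ne'

lemma continuous_gibbsVariance (hP : ∀ σ, 0 < P σ) (φ : S → ℝ) :
    Continuous fun H => gibbsVariance P H φ :=
  (continuous_gibbs hP _).sub ((continuous_gibbs hP φ).pow 2)

lemma abs_gibbs_le (hP : ∀ σ, 0 < P σ) {g : S → ℝ} {C : ℝ} (hg : ∀ σ, |g σ| ≤ C)
    (H : S → ℝ) : |gibbs P H g| ≤ C := by
  have hZ := sum_mul_exp_pos hP H
  rw [gibbs, abs_div, abs_of_pos hZ, div_le_iff₀ hZ, Finset.mul_sum]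
  refine (Finset.abs_sum_le_sum_abs _ _).trans (Finset.sum_le_sum fun σ _ => ?_)
  rw [abs_mul, abs_mul, abs_of_pos (hP σ), abs_of_pos (exp_pos _), mul_right_comm, mul_comm C]
  exact mul_le_mul_of_nonneg_left (hg σ) (mul_pos (hP σ) (exp_pos _)).le

lemma sq_gibbs_le_gibbs_sq (hP : ∀ σ, 0 < P σ) (H φ : S → ℝ) :
    gibbs P H φ ^ 2 ≤ gibbs P H (fun σ => φ σ ^ 2) := by
  have hZ := sum_mul_exp_pos hP H
  have cauchy_schwarz : (∑ σ, P σ * φ σ * exp (H σ)) ^ 2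
      ≤ (∑ σ, P σ * exp (H σ)) * ∑ σ, P σ * φ σ ^ 2 * exp (H σ) :=
    Finset.sum_sq_le_sum_mul_sum_of_sq_le_mul _
      (fun σ _ => (mul_pos (hP σ) (exp_pos _)).le)
      (fun σ _ => by have := hP σ; positivity) (fun σ _ => le_of_eq (by ring))
  rw [gibbs, gibbs, div_pow, div_le_div_iff₀ (by positivity) hZ]
  nlinarith

lemma gibbsVariance_nonneg (hP : ∀ σ, 0 < P σ) (H φ : S → ℝ) : 0 ≤ gibbsVariance P H φ :=
  sub_nonneg.2 (sq_gibbs_le_gibbs_sq hP H φ)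

lemma abs_gibbsVariance_le (hP : ∀ σ, 0 < P σ) {φ : S → ℝ} {M : ℝ} (hφ : ∀ σ, |φ σ| ≤ M)
    (H : S → ℝ) : |gibbsVariance P H φ| ≤ M ^ 2 := by
  have hφ2 : ∀ σ, |φ σ ^ 2| ≤ M ^ 2 := fun σ => by
    rw [abs_pow]; exact pow_le_pow_left₀ (abs_nonneg _) (hφ σ) 2
  rw [abs_of_nonneg (gibbsVariance_nonneg hP H φ)]
  exact (sub_le_self _ (sq_nonneg _)).trans (le_of_abs_le (abs_gibbs_le hP hφ2 H))

lemma hasDerivAt_gibbs_add_mul (hP : ∀ σ, 0 < P σ) (H φ g : S → ℝ) (t : ℝ) :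
    HasDerivAt (fun t => gibbs P (fun σ => H σ + t * φ σ) g)
      (gibbs P (fun σ => H σ + t * φ σ) (fun σ => g σ * φ σ)
        - gibbs P (fun σ => H σ + t * φ σ) g * gibbs P (fun σ => H σ + t * φ σ) φ) t := by
  have hsum : ∀ h : S → ℝ, HasDerivAt (fun t => ∑ σ, P σ * h σ * exp (H σ + t * φ σ))
      (∑ σ, P σ * (h σ * φ σ) * exp (H σ + t * φ σ)) t := fun h =>
    HasDerivAt.fun_sum fun σ _ =>
      (((hasDerivAt_mul_const (φ σ)).const_add (H σ)).exp.const_mul (P σ * h σ)).congr_deriv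
        (by ring)
  have hZ := hsum 1
  simp only [Pi.one_apply, mul_one, one_mul] at hZ
  refine ((hsum g).div hZ (sum_mul_exp_pos hP _).ne').congr_deriv ?_
  have quotient_rule : ∀ a b c d : ℝ, d ≠ 0 →
      (a * d - b * c) / d ^ 2 = a / d - b / d * (c / d) :=
    fun a b c d hd => by field_simp
  exact quotient_rule _ _ _ _ (sum_mul_exp_pos hP _).ne'

lemma integral_mul_gibbs_gaussianReal (hP : ∀ σ, 0 < P σ) {φ : S → ℝ} {M : ℝ}
    (hφ : ∀ σ, |φ σ| ≤ M) (H : S → ℝ) (v : ℝ≥0) :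
    ∫ t, t * gibbs P (fun σ => H σ + t * φ σ) φ ∂gaussianReal 0 v
      = v * ∫ t, gibbsVariance P (fun σ => H σ + t * φ σ) φ ∂gaussianReal 0 v := by
  have hderiv : ∀ t, HasDerivAt (fun t => gibbs P (fun σ => H σ + t * φ σ) φ)
      (gibbsVariance P (fun σ => H σ + t * φ σ) φ) t := fun t =>
    (hasDerivAt_gibbs_add_mul hP H φ φ t).congr_deriv (by simp only [gibbsVariance, sq])
  have hvar : Integrable (fun t => gibbsVariance P (fun σ => H σ + t * φ σ) φ)
      (gaussianReal 0 v) :=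
    .of_bound ((continuous_gibbsVariance hP φ).comp (by fun_prop)).aestronglyMeasurable _
      (ae_of_all _ fun t => abs_gibbsVariance_le hP hφ _)
  simpa only [sub_zero] using
    integral_sub_mul_gaussianReal hderiv (fun t => abs_gibbs_le hP hφ _) hvar

end Gibbs

section Hamiltonian

variable {ι S : Type*} [Fintype ι]

def hamiltonian (Φ : ι → S → ℝ) (J : ι → ℝ) (σ : S) : ℝ :=
  ∑ X, J X * Φ X σ

lemma continuous_hamiltonian (Φ : ι → S → ℝ) : Continuous (hamiltonian Φ) := by
  unfold hamiltonian
  fun_prop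

lemma hamiltonian_update [DecidableEq ι] (Φ : ι → S → ℝ) (J : ι → ℝ) (i : ι) (t : ℝ) :
    hamiltonian Φ (update J i t) = fun σ => hamiltonian Φ (update J i 0) σ + t * Φ i σ := by
  ext σ
  simp only [hamiltonian]
  rw [Fintype.sum_eq_add_sum_compl i, Fintype.sum_eq_add_sum_compl i (fun X => _ * Φ X σ)]
  simp only [update_self, zero_mul, zero_add, add_comm]
  refine congrArg _ (Finset.sum_congr rfl fun X hX => ?_)
  have hXi : X ≠ i := by simpa using hX
  rw [update_of_ne hXi, update_of_ne hXi]

variable [Fintype S] [Nonempty S] {P : S → ℝ}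

theorem integral_mul_gibbs_hamiltonian (hP : ∀ σ, 0 < P σ) (Φ : ι → S → ℝ)
    (v : ι → ℝ≥0) (i : ι) :
    ∫ J, J i * gibbs P (hamiltonian Φ J) (Φ i) ∂Measure.pi (fun X => gaussianReal 0 (v X))
      = v i * ∫ J, gibbsVariance P (hamiltonian Φ J) (Φ i)
          ∂Measure.pi (fun X => gaussianReal 0 (v X)) := by
  classical
  obtain ⟨M, hM⟩ := Finite.exists_le fun σ => |Φ i σ|
  have hlin : Integrable (fun J => J i * gibbs P (hamiltonian Φ J) (Φ i))
      (Measure.pi fun X => gaussianReal 0 (v X)) :=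
    ((measurePreserving_eval _ i).integrable_comp_of_integrable (g := id)
      ((memLp_id_gaussianReal 1).integrable le_rfl)).mul_bdd
      ((continuous_gibbs hP _).comp (continuous_hamiltonian Φ)).aestronglyMeasurable
      (ae_of_all _ fun J => abs_gibbs_le hP hM _)
  have hvar : Integrable (fun J => gibbsVariance P (hamiltonian Φ J) (Φ i))
      (Measure.pi fun X => gaussianReal 0 (v X)) :=
    .of_bound
      ((continuous_gibbsVariance hP _).comp (continuous_hamiltonian Φ)).aestronglyMeasurable
      _ (ae_of_all _ fun J => abs_gibbsVariance_le hP hM _)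
  rw [integral_pi_eq_integral_integral_update _ i hlin,
    integral_pi_eq_integral_integral_update _ i hvar, ← integral_const_mul]
  refine integral_congr_ae (ae_of_all _ fun J => ?_)
  simpa only [update_self, ← hamiltonian_update] using
    integral_mul_gibbs_gaussianReal hP hM (hamiltonian Φ (update J i 0)) (v i)

end Hamiltonian

theorem quenched_JPhi_nonneg_general
    {ι S : Type*} [Fintype ι] [Fintype S] [Nonempty S]
    (P : S → ℝ) (hP : ∀ σ, 0 < P σ)
    (Φ : ι → S → ℝ) (Δ : ι → ℝ)
    (μ : Measure (ι → ℝ))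
    (hμ : μ = Measure.pi fun X => gaussianReal 0 ⟨Δ X ^ 2, sq_nonneg (Δ X)⟩)
    (ω : (ι → ℝ) → (S → ℝ) → ℝ)
    (hω : ∀ (J : ι → ℝ) (g : S → ℝ),
      ω J g = (∑ σ, P σ * g σ * Real.exp (∑ X, J X * Φ X σ))
        / (∑ σ, P σ * Real.exp (∑ X, J X * Φ X σ)))
    (X₀ : ι) :
    (∫ J, J X₀ * ω J (Φ X₀) ∂μ
        = Δ X₀ ^ 2 * ∫ J, (ω J (fun σ => Φ X₀ σ ^ 2) - (ω J (Φ X₀)) ^ 2) ∂μ) ∧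
      0 ≤ ∫ J, J X₀ * ω J (Φ X₀) ∂μ := by
  have hω_gibbs : ∀ J g, ω J g = gibbs P (hamiltonian Φ J) g := hω
  have key : ∫ J, J X₀ * gibbs P (hamiltonian Φ J) (Φ X₀) ∂μ
      = Δ X₀ ^ 2 * ∫ J, gibbsVariance P (hamiltonian Φ J) (Φ X₀) ∂μ := by
    subst hμ
    exact integral_mul_gibbs_hamiltonian hP Φ (fun X => ⟨Δ X ^ 2, sq_nonneg (Δ X)⟩) X₀
  simp only [hω_gibbs]
  exact ⟨key, key ▸ mul_nonneg (sq_nonneg _) (integral_nonneg fun J => gibbsVariance_nonneg hP _ _)⟩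

/-- Quenched expectation of `J_X Φ_X`: for a Hamiltonian `U(J,σ) = Σ_X J_X Φ_X(σ)` with
independent centered Gaussian couplings, `Av[ω_J(J_X Φ_X)] = Δ_X² Av[ω_J(Φ_X²) − ω_J(Φ_X)²] ≥ 0`. -/
theorem quenched_JPhi_nonneg
    {ι S : Type*} [Fintype ι] [Fintype S] [Nonempty S]
    (P : S → ℝ) (hP : ∀ σ, 0 < P σ) (hP1 : ∑ σ, P σ = 1)
    (Φ : ι → S → ℝ) (Δ : ι → ℝ)
    (μ : Measure (ι → ℝ))
    (hμ : μ = Measure.pi fun X => gaussianReal 0 ⟨Δ X ^ 2, sq_nonneg (Δ X)⟩)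
    (ω : (ι → ℝ) → (S → ℝ) → ℝ)
    (hω : ∀ (J : ι → ℝ) (g : S → ℝ),
      ω J g = (∑ σ, P σ * g σ * Real.exp (∑ X, J X * Φ X σ))
        / (∑ σ, P σ * Real.exp (∑ X, J X * Φ X σ)))
    (X₀ : ι) :
    (∫ J, J X₀ * ω J (Φ X₀) ∂μ
        = Δ X₀ ^ 2 * ∫ J, (ω J (fun σ => Φ X₀ σ ^ 2) - (ω J (Φ X₀)) ^ 2) ∂μ) ∧
      0 ≤ ∫ J, J X₀ * ω J (Φ X₀) ∂μ :=
  quenched_JPhi_nonneg_general P hP Φ Δ μ hμ ω hω X₀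
end

section
/- Let Λ be a finite set partitioned into nonempty disjoint subsets Λ_1, …, Λ_n. For the Gaussian random potential U_Λ(J,σ) = Σ_{X ⊆ Λ} J_X Φ_X(σ_X) with independent centered Gaussian couplings of volume-independent variances Δ_X², the quenched pressure P_Λ = Av[ln Z_Λ(J)] is superadditive: P_Λ ≥ Σ_{s=1}^n P_{Λ_s}. -/
/-!
Split the couplings into those of sets lying inside a single block and all the others. The
log-partition function is convex in the couplings (a log-sum-exp of linear forms), so by
Jensen's inequality, conditionally on the first group, averaging over the independent centered
couplings of the second group can only increase its mean compared with switching them off.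
With intra-block couplings only, the Gibbs weight factorizes over the disjoint blocks and
`log Z_Λ` is the sum of the block terms `log Z_{Λ_s}`, except for the coupling of the empty set,
which every block sees; since `Φ_∅` is constant, that coupling only shifts each `log Z` by a
centered amount.
-/

open Finset MeasureTheory ProbabilityTheory Real Function

section PartitionFunction

variable {ι Ω : Type*} [Fintype ι] [Fintype Ω]

noncomputable def partitionFunction (w : Ω → ℝ) (φ : ι → Ω → ℝ) (J : ι → ℝ) : ℝ :=
  ∑ ω, w ω * exp (∑ i, J i * φ i ω)

variable {w : Ω → ℝ} (φ : ι → Ω → ℝ)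

lemma partitionFunction_zero (hw1 : ∑ ω, w ω = 1) : partitionFunction w φ 0 = 1 := by
  simp [partitionFunction, hw1]

lemma partitionFunction_pos (hw0 : ∀ ω, 0 ≤ w ω) (hw1 : ∑ ω, w ω = 1) (J : ι → ℝ) :
    0 < partitionFunction w φ J := by
  obtain ⟨ω, -, hω⟩ := exists_lt_of_sum_lt (s := univ) (f := fun _ => (0 : ℝ)) (g := w)
    (by simp [hw1])
  exact sum_pos' (fun ω _ => mul_nonneg (hw0 ω) (exp_pos _).le)
    ⟨ω, mem_univ _, mul_pos hω (exp_pos _)⟩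

lemma log_partitionFunction_add_ge (hw0 : ∀ ω, 0 ≤ w ω) (hw1 : ∑ ω, w ω = 1) (J K : ι → ℝ) :
    log (partitionFunction w φ J) +
        ∑ ω, w ω * exp (∑ i, J i * φ i ω) / partitionFunction w φ J * ∑ i, K i * φ i ω
      ≤ log (partitionFunction w φ (J + K)) := by
  set Z := partitionFunction w φ J
  have hZ : 0 < Z := partitionFunction_pos φ hw0 hw1 J
  -- the Gibbs measure at `J`
  set ρ : Ω → ℝ := fun ω => w ω * exp (∑ i, J i * φ i ω) / Z
  have hρ0 : ∀ ω ∈ univ, 0 ≤ ρ ω := fun ω _ => by positivity [hw0 ω]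
  have hρ1 : ∑ ω, ρ ω = 1 := by rw [← sum_div]; exact div_self hZ.ne'
  have hZK : partitionFunction w φ (J + K) = Z * ∑ ω, ρ ω * exp (∑ i, K i * φ i ω) := by
    simp only [partitionFunction, mul_sum, ρ, Pi.add_apply, add_mul, sum_add_distrib, exp_add]
    exact sum_congr rfl fun ω _ => by field_simp
  have hjensen : exp (∑ ω, ρ ω * ∑ i, K i * φ i ω) ≤ ∑ ω, ρ ω * exp (∑ i, K i * φ i ω) :=
    convexOn_exp.map_sum_le hρ0 hρ1 (fun _ _ => Set.mem_univ _)
  have hpos := (exp_pos _).trans_le hjensen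
  rw [hZK, log_mul hZ.ne' hpos.ne', add_le_add_iff_left]
  exact (le_log_iff_exp_le hpos).2 hjensen

lemma convexOn_log_partitionFunction (hw0 : ∀ ω, 0 ≤ w ω) (hw1 : ∑ ω, w ω = 1) :
    ConvexOn ℝ Set.univ fun J => log (partitionFunction w φ J) := by
  refine ⟨convex_univ, fun x _ y _ a b ha hb hab => ?_⟩
  set z := a • x + b • y
  set ρ := fun ω => w ω * exp (∑ i, z i * φ i ω) / partitionFunction w φ z
  have hx := log_partitionFunction_add_ge φ hw0 hw1 z (x - z)
  have hy := log_partitionFunction_add_ge φ hw0 hw1 z (y - z)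
  rw [add_sub_cancel] at hx hy
  -- the Gibbs averages cancel because `a • (x - z) + b • (y - z) = 0`
  have hcancel : a * ∑ ω, ρ ω * ∑ i, (x - z) i * φ i ω
      + b * ∑ ω, ρ ω * ∑ i, (y - z) i * φ i ω = 0 := by
    simp only [mul_sum, ← sum_add_distrib]
    refine sum_eq_zero fun ω _ => sum_eq_zero fun i _ => ?_
    simp only [z, Pi.sub_apply, Pi.add_apply, Pi.smul_apply, smul_eq_mul]
    linear_combination (-(ρ ω * φ i ω * (a * x i + b * y i))) * hab
  have hsplit : a * log (partitionFunction w φ z) + b * log (partitionFunction w φ z)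
      = log (partitionFunction w φ z) := by rw [← add_mul, hab, one_mul]
  simp only [smul_eq_mul]
  nlinarith [mul_le_mul_of_nonneg_left hx ha, mul_le_mul_of_nonneg_left hy hb]

lemma lipschitzWith_log_partitionFunction (hw0 : ∀ ω, 0 ≤ w ω) (hw1 : ∑ ω, w ω = 1) :
    ∃ K, LipschitzWith K fun J => log (partitionFunction w φ J) := by
  obtain ⟨C, hC⟩ := Finite.exists_le fun p : ι × Ω => |φ p.1 p.2|
  refine ⟨_, LipschitzWith.of_le_add_mul' (Fintype.card ι * C) fun J J' => ?_⟩
  set c := Fintype.card ι * C * dist J J'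
  have henergy : ∀ ω, ∑ i, J i * φ i ω ≤ ∑ i, J' i * φ i ω + c := by
    intro ω
    have hterm : ∀ i, (J i - J' i) * φ i ω ≤ C * dist J J' := fun i => calc
      (J i - J' i) * φ i ω ≤ |J i - J' i| * |φ i ω| := by rw [← abs_mul]; exact le_abs_self _
      _ ≤ dist J J' * C :=
        mul_le_mul (dist_le_pi_dist J J' i) (hC (i, ω)) (abs_nonneg _) dist_nonneg
      _ = C * dist J J' := mul_comm _ _
    calc ∑ i, J i * φ i ω = ∑ i, J' i * φ i ω + ∑ i, (J i - J' i) * φ i ω := by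
          rw [← sum_add_distrib]; exact sum_congr rfl fun i _ => by ring
      _ ≤ ∑ i, J' i * φ i ω + ∑ _i : ι, C * dist J J' :=
          add_le_add_right (sum_le_sum fun i _ => hterm i) _
      _ = ∑ i, J' i * φ i ω + c := by simp [c, mul_assoc]
  have hZ : partitionFunction w φ J ≤ exp c * partitionFunction w φ J' := by
    rw [partitionFunction, partitionFunction, mul_sum]
    refine sum_le_sum fun ω _ => ?_
    rw [mul_left_comm, ← exp_add, add_comm c]
    gcongr
    exacts [hw0 ω, henergy ω]
  calc log (partitionFunction w φ J)
      ≤ log (exp c * partitionFunction w φ J') :=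
        log_le_log (partitionFunction_pos φ hw0 hw1 J) hZ
    _ = log (partitionFunction w φ J') + c := by
        rw [log_mul (exp_pos _).ne' (partitionFunction_pos φ hw0 hw1 J').ne', log_exp, add_comm]

lemma integrable_log_partitionFunction_comp (hw0 : ∀ ω, 0 ≤ w ω) (hw1 : ∑ ω, w ω = 1)
    {α : Type*} [MeasurableSpace α] {μ : Measure α} {g : α → ι → ℝ} (hg : Integrable g μ) :
    Integrable (fun a => log (partitionFunction w φ (g a))) μ := by
  obtain ⟨K, hK⟩ := lipschitzWith_log_partitionFunction φ hw0 hw1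
  exact memLp_one_iff_integrable.1 <| hK.comp_memLp (by simp [partitionFunction_zero φ hw1])
    (memLp_one_iff_integrable.2 hg)

lemma log_partitionFunction_update [DecidableEq ι] (hw0 : ∀ ω, 0 ≤ w ω)
    (hw1 : ∑ ω, w ω = 1) {i₀ : ι} {c : ℝ} (hc : ∀ ω, φ i₀ ω = c) (J : ι → ℝ) (t : ℝ) :
    log (partitionFunction w φ (update J i₀ t))
      = log (partitionFunction w φ J) + (t - J i₀) * c := by
  have henergy : ∀ ω, ∑ i, update J i₀ t i * φ i ω
      = (t - J i₀) * c + ∑ i, J i * φ i ω := by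
    intro ω
    rw [← add_sum_erase _ _ (mem_univ i₀), ← add_sum_erase _ _ (mem_univ i₀),
      update_self, hc, sum_congr rfl fun i hi => by
        rw [update_of_ne (ne_of_mem_erase hi)]]
    ring
  have hZ : partitionFunction w φ (update J i₀ t)
      = exp ((t - J i₀) * c) * partitionFunction w φ J := by
    simp only [partitionFunction, henergy, exp_add, mul_sum]
    exact sum_congr rfl fun ω _ => by ring
  rw [hZ, log_mul (exp_pos _).ne' (partitionFunction_pos φ hw0 hw1 J).ne', log_exp, add_comm]

lemma partitionFunction_indicator_setOf (p : ι → Prop) [DecidablePred p] (J : ι → ℝ) :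
    partitionFunction w φ ({i | p i}.indicator J)
      = ∑ ω, w ω * exp (∑ i ∈ univ.filter p, J i * φ i ω) := by
  simp only [partitionFunction, sum_filter, Set.indicator_apply, Set.mem_ofPred_eq, ite_mul,
    zero_mul]

end PartitionFunction

section ProductWeight

variable {Λ S : Type*} [Fintype Λ] [DecidableEq Λ] [Fintype S] {ν : S → ℝ}

lemma sum_prod_apply_eq_one (hν1 : ∑ x, ν x = 1) :
    ∑ σ : Λ → S, ∏ i, ν (σ i) = 1 := by
  rw [← Fintype.prod_sum]; simp [hν1]

lemma sum_prod_mul_mul_of_dependsOn (hν1 : ∑ x, ν x = 1) {A : Set Λ} {g h : (Λ → S) → ℝ}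
    (hg : DependsOn g A) (hh : DependsOn h Aᶜ) :
    ∑ σ : Λ → S, (∏ i, ν (σ i)) * (g σ * h σ)
      = (∑ σ : Λ → S, (∏ i, ν (σ i)) * g σ) * ∑ σ : Λ → S, (∏ i, ν (σ i)) * h σ := by
  classical
  set w : (Λ → S) → ℝ := fun σ => ∏ i, ν (σ i)
  -- exchanging the spins off `A` between two configurations preserves the product weight
  let exchange : (Λ → S) × (Λ → S) → (Λ → S) × (Λ → S) :=
    fun p => (A.piecewise p.1 p.2, A.piecewise p.2 p.1)
  have hexchange : Involutive exchange := fun p => by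
    ext i <;> by_cases hi : i ∈ A <;> simp [exchange, hi]
  have hw : ∀ p, w (exchange p).1 * w (exchange p).2 = w p.1 * w p.2 := fun p => by
    simp only [w, ← prod_mul_distrib]
    exact prod_congr rfl fun i _ => by by_cases hi : i ∈ A <;> simp [exchange, hi, mul_comm]
  have hg' : ∀ p, g (exchange p).1 = g p.1 := fun p => hg fun i hi => by simp [exchange, hi]
  have hh' : ∀ p, h (exchange p).1 = h p.2 := fun p => hh fun i hi => by
    simp [exchange, show i ∉ A from hi]
  calc ∑ σ, w σ * (g σ * h σ)
      = ∑ p : (Λ → S) × (Λ → S), w p.1 * w p.2 * (g p.1 * h p.1) := by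
        have hw1 : ∑ σ, w σ = 1 := sum_prod_apply_eq_one hν1
        simp only [Fintype.sum_prod_type, ← sum_mul, ← mul_sum, hw1, mul_one]
    _ = ∑ p : (Λ → S) × (Λ → S), w p.1 * w p.2 * (g p.1 * h p.2) := by
        rw [← Equiv.sum_comp (Involutive.toPerm exchange hexchange)]
        exact sum_congr rfl fun p _ => by simp only [Involutive.coe_toPerm, hw, hg', hh']
    _ = (∑ σ, w σ * g σ) * ∑ σ, w σ * h σ := by
        rw [Fintype.sum_prod_type, sum_mul_sum]
        exact sum_congr rfl fun σ _ => sum_congr rfl fun τ _ => by ring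

lemma sum_prod_mul_prod_of_dependsOn (hν1 : ∑ x, ν x = 1) {κ : Type*} {B : κ → Set Λ}
    (hB : Pairwise (Disjoint on B)) {f : κ → (Λ → S) → ℝ} (hf : ∀ k, DependsOn (f k) (B k))
    (T : Finset κ) :
    ∑ σ : Λ → S, (∏ i, ν (σ i)) * ∏ k ∈ T, f k σ
      = ∏ k ∈ T, ∑ σ : Λ → S, (∏ i, ν (σ i)) * f k σ := by
  classical
  induction T using Finset.induction_on with
  | empty => simp [sum_prod_apply_eq_one hν1]
  | insert k T hk ih =>
    have hrest : DependsOn (fun σ => ∏ l ∈ T, f l σ) (B k)ᶜ := fun σ τ h =>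
      prod_congr rfl fun l hl => hf l fun i hi =>
        h i (Set.disjoint_right.mp (hB (ne_of_mem_of_not_mem hl hk).symm) hi)
    simp only [prod_insert hk]
    rw [sum_prod_mul_mul_of_dependsOn hν1 (hf k) hrest, ih]

lemma partitionFunction_sum_eq_prod (hν1 : ∑ x, ν x = 1) {Φ : Finset Λ → (Λ → S) → ℝ}
    (hΦ : ∀ X, DependsOn (Φ X) X) {κ : Type*} [Fintype κ] {B : κ → Set Λ}
    (hB : Pairwise (Disjoint on B)) {K : κ → Finset Λ → ℝ}
    (hK : ∀ k X, K k X ≠ 0 → ↑X ⊆ B k) :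
    partitionFunction (fun σ => ∏ i, ν (σ i)) Φ (∑ k, K k)
      = ∏ k, partitionFunction (fun σ => ∏ i, ν (σ i)) Φ (K k) := by
  have hlocal : ∀ k, DependsOn (fun σ => exp (∑ X, K k X * Φ X σ)) (B k) :=
    fun k σ τ h => congrArg exp <| sum_congr rfl fun X _ => by
      by_cases hX : K k X = 0
      · simp [hX]
      · rw [hΦ X fun i hi => h i (hK k X hX hi)]
  have hexp : ∀ σ, exp (∑ X, (∑ k, K k) X * Φ X σ) = ∏ k, exp (∑ X, K k X * Φ X σ) :=
    fun σ => by simp only [Finset.sum_apply, sum_mul]; rw [sum_comm, exp_sum]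
  simp only [partitionFunction, hexp]
  exact sum_prod_mul_prod_of_dependsOn hν1 hB hlocal univ

end ProductWeight

theorem integral_comp_indicator_le_of_convexOn {ι : Type*} [Fintype ι] {μ : ι → Measure ℝ}
    [∀ i, IsProbabilityMeasure (μ i)] (hμ : ∀ i, Integrable id (μ i))
    (hμ0 : ∀ i, ∫ x, x ∂μ i = 0) (T : Set ι) {F : (ι → ℝ) → ℝ} (hF : ConvexOn ℝ Set.univ F)
    (hFi : Integrable F (Measure.pi μ))
    (hFTi : Integrable (fun J => F (T.indicator J)) (Measure.pi μ)) :
    ∫ J, F (T.indicator J) ∂Measure.pi μ ≤ ∫ J, F J ∂Measure.pi μ := by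
  classical
  set e := MeasurableEquiv.piEquivPiSubtypeProd (fun _ : ι => ℝ) (· ∈ T)
  set μ₁ := Measure.pi fun i : {i // i ∈ T} => μ i
  set μ₂ := Measure.pi fun i : {i // i ∉ T} => μ i
  have he : MeasurePreserving e.symm (μ₁.prod μ₂) (Measure.pi μ) :=
    (measurePreserving_piEquivPiSubtypeProd μ (· ∈ T)).symm e
  have he_apply : ∀ a b i, e.symm (a, b) i = if h : i ∈ T then a ⟨i, h⟩ else b ⟨i, h⟩ :=
    fun a b i => by simp [e, MeasurableEquiv.piEquivPiSubtypeProd_symm_apply]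
  have hind : ∀ a b, T.indicator (e.symm (a, b)) = e.symm (a, 0) := fun a b => by
    funext i; by_cases hi : i ∈ T <;> simp [he_apply, hi]
  -- Jensen's inequality in the coordinates outside `T`, whose mean is `e.symm (a, 0)`
  have hjensen : ∀ a, Integrable (fun b => F (e.symm (a, b))) μ₂ →
      F (e.symm (a, 0)) ≤ ∫ b, F (e.symm (a, b)) ∂μ₂ := by
    intro a hFa
    have hcoord : ∀ i, Integrable (fun b => e.symm (a, b) i) μ₂ := fun i => by
      by_cases hi : i ∈ T
      · simp only [he_apply, hi, dif_pos]; exact integrable_const _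
      · simp only [he_apply, hi, dif_neg, not_false_eq_true]
        exact integrable_eval (μ := fun j : {i // i ∉ T} => μ j) (hμ i)
    have hmean : ∫ b, e.symm (a, b) ∂μ₂ = e.symm (a, 0) := by
      funext i
      rw [eval_integral hcoord]
      by_cases hi : i ∈ T
      · simp [he_apply, hi]
      · simp only [he_apply, hi, dif_neg, not_false_eq_true, Pi.zero_apply]
        rw [integral_eval (μ := fun j : {i // i ∉ T} => μ j), hμ0]
    calc F (e.symm (a, 0)) = F (∫ b, e.symm (a, b) ∂μ₂) := by rw [hmean]
      _ ≤ ∫ b, F (e.symm (a, b)) ∂μ₂ :=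
        hF.map_integral_le hF.locallyLipschitz.continuous.continuousOn isClosed_univ
          (ae_of_all _ fun _ => Set.mem_univ _) (Integrable.of_eval hcoord) hFa
  have hFi' := (he.integrable_comp hFi.aestronglyMeasurable).2 hFi
  have hFTi' := (he.integrable_comp hFTi.aestronglyMeasurable).2 hFTi
  have hFTi₁ : Integrable (fun a => F (e.symm (a, 0))) μ₁ := by
    simpa [hind] using hFTi'.integral_prod_left
  calc ∫ J, F (T.indicator J) ∂Measure.pi μ
      = ∫ x, F (T.indicator (e.symm x)) ∂μ₁.prod μ₂ := (he.integral_comp' _).symm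
    _ = ∫ a, F (e.symm (a, 0)) ∂μ₁ := by
        simp only [hind]; rw [integral_fun_fst (fun a => F (e.symm (a, 0)))]; simp
    _ ≤ ∫ a, ∫ b, F (e.symm (a, b)) ∂μ₂ ∂μ₁ :=
        integral_mono_ae hFTi₁ hFi'.integral_prod_left (hFi'.prod_right_ae.mono hjensen)
    _ = ∫ x, F (e.symm x) ∂μ₁.prod μ₂ := (integral_prod _ hFi').symm
    _ = ∫ J, F J ∂Measure.pi μ := he.integral_comp' _

theorem sum_integral_log_partitionFunction_indicator_le {Λ S : Type*} [Fintype Λ]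
    [DecidableEq Λ] [Fintype S] [Nonempty S] {ν : S → ℝ} (hν : ∀ x, 0 ≤ ν x)
    (hν1 : ∑ x, ν x = 1) {Φ : Finset Λ → (Λ → S) → ℝ} (hΦ : ∀ X, DependsOn (Φ X) X)
    {μ : Finset Λ → Measure ℝ} [∀ X, IsProbabilityMeasure (μ X)]
    (hμ : ∀ X, Integrable id (μ X)) (hμ0 : ∀ X, ∫ x, x ∂μ X = 0)
    {n : ℕ} {B : Fin n → Finset Λ} (hB : Pairwise (Disjoint on B)) :
    ∑ s, ∫ J, log (partitionFunction (fun σ => ∏ i, ν (σ i)) Φ ({X | X ⊆ B s}.indicator J))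
        ∂Measure.pi μ
      ≤ ∫ J, log (partitionFunction (fun σ => ∏ i, ν (σ i)) Φ J) ∂Measure.pi μ := by
  have hw0 : ∀ σ : Λ → S, 0 ≤ ∏ i, ν (σ i) := fun σ => prod_nonneg fun i _ => hν _
  have hw1 : ∑ σ : Λ → S, ∏ i, ν (σ i) = 1 := sum_prod_apply_eq_one hν1
  have hZint : ∀ A : Set (Finset Λ), Integrable
      (fun J => log (partitionFunction (fun σ => ∏ i, ν (σ i)) Φ (A.indicator J)))
      (Measure.pi μ) := fun A =>
    integrable_log_partitionFunction_comp Φ hw0 hw1 <| Integrable.of_eval fun X => by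
      by_cases hX : X ∈ A
      · simpa [hX] using integrable_eval (μ := μ) (hμ X)
      · simp [hX]
  -- removing the empty set makes the coupling sets of different blocks disjoint
  set T : Fin n → Set (Finset Λ) := fun s => {X | X.Nonempty ∧ X ⊆ B s}
  have hT : Pairwise (Disjoint on T) := fun s t hst => Set.disjoint_left.2 fun X hs ht => by
    obtain ⟨i, hi⟩ := hs.1
    exact Finset.disjoint_left.1 (hB hst) (hs.2 hi) (ht.2 hi)
  obtain ⟨c, hc⟩ : ∃ c, ∀ σ, Φ ∅ σ = c :=
    ⟨Φ ∅ (Classical.arbitrary _), fun σ => hΦ ∅ (by simp)⟩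
  have hblock : ∀ s J,
      log (partitionFunction (fun σ => ∏ i, ν (σ i)) Φ ({X | X ⊆ B s}.indicator J))
        = log (partitionFunction (fun σ => ∏ i, ν (σ i)) Φ ((T s).indicator J)) + J ∅ * c := by
    intro s J
    have hupdate : {X | X ⊆ B s}.indicator J = update ((T s).indicator J) ∅ (J ∅) := by
      funext X
      rcases eq_or_ne X ∅ with rfl | hX
      · simp
      · simp [hX, T, Set.indicator_apply, Finset.nonempty_iff_ne_empty]
    rw [hupdate, log_partitionFunction_update Φ hw0 hw1 hc,
      Set.indicator_of_notMem (by simp [T]), sub_zero]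
  have hfactor : ∀ J,
      log (partitionFunction (fun σ => ∏ i, ν (σ i)) Φ ((⋃ s, T s).indicator J))
        = ∑ s, log (partitionFunction (fun σ => ∏ i, ν (σ i)) Φ ((T s).indicator J)) := by
    intro J
    have hsum : (⋃ s, T s).indicator J = ∑ s, (T s).indicator J := by
      funext X
      simpa using Finset.indicator_biUnion_apply univ T (fun s _ t _ hst => hT hst) X
    rw [hsum, partitionFunction_sum_eq_prod hν1 hΦ (B := fun s => (B s : Set Λ))
      (K := fun s => (T s).indicator J) (fun s t hst => Finset.disjoint_coe.2 (hB hst))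
      (fun s X hX => Finset.coe_subset.2 (Set.mem_of_indicator_ne_zero hX).2),
      log_prod fun s _ => (partitionFunction_pos Φ hw0 hw1 _).ne']
  calc ∑ s, ∫ J, log (partitionFunction _ Φ ({X | X ⊆ B s}.indicator J)) ∂Measure.pi μ
      = ∑ s, ∫ J, log (partitionFunction _ Φ ((T s).indicator J)) ∂Measure.pi μ := by
        refine sum_congr rfl fun s _ => ?_
        simp only [hblock]
        rw [integral_add (hZint _) ((integrable_eval (hμ ∅)).mul_const c), integral_mul_const,
          integral_eval, hμ0, zero_mul, add_zero]
    _ = ∫ J, log (partitionFunction _ Φ ((⋃ s, T s).indicator J)) ∂Measure.pi μ := by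
        simp only [hfactor]
        exact (integral_finsetSum _ fun s _ => hZint _).symm
    _ ≤ ∫ J, log (partitionFunction _ Φ J) ∂Measure.pi μ :=
        integral_comp_indicator_le_of_convexOn hμ hμ0 _
          (convexOn_log_partitionFunction Φ hw0 hw1)
          (integrable_log_partitionFunction_comp Φ hw0 hw1
            (Integrable.of_eval fun X => integrable_eval (hμ X)))
          (hZint _)

theorem quenched_pressure_superadditive_general
    {Λ S : Type*} [Fintype Λ] [DecidableEq Λ] [Fintype S] [Nonempty S]
    (ν : S → ℝ) (hν : ∀ x, 0 < ν x) (hν1 : ∑ x, ν x = 1)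
    (Φ : Finset Λ → (Λ → S) → ℝ)
    (hΦloc : ∀ (X : Finset Λ) (σ τ : Λ → S), (∀ i ∈ X, σ i = τ i) → Φ X σ = Φ X τ)
    (Δ : Finset Λ → ℝ)
    (μ : Measure (Finset Λ → ℝ))
    (hμ : μ = Measure.pi fun X => gaussianReal 0 ⟨Δ X ^ 2, sq_nonneg (Δ X)⟩)
    (n : ℕ) (B : Fin n → Finset Λ)
    (hBdisj : ∀ s t, s ≠ t → Disjoint (B s) (B t)) :
    ∑ s : Fin n, ∫ J,
        Real.log (∑ σ : Λ → S, (∏ i, ν (σ i)) *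
          Real.exp (∑ X ∈ Finset.univ.filter (· ⊆ B s), J X * Φ X σ)) ∂μ
      ≤ ∫ J,
        Real.log (∑ σ : Λ → S, (∏ i, ν (σ i)) *
          Real.exp (∑ X, J X * Φ X σ)) ∂μ := by
  subst hμ
  simp only [← partitionFunction_indicator_setOf]
  exact sum_integral_log_partitionFunction_indicator_le (fun x => (hν x).le) hν1
    (fun X σ τ h => hΦloc X σ τ h) (fun X => (memLp_id_gaussianReal 1).integrable le_rfl)
    (fun X => integral_id_gaussianReal) (fun s t hst => hBdisj s t hst)

/-- Superadditivity of the quenched pressure: if `Λ` is partitioned into nonempty disjoint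
blocks `B s`, then `P_Λ = Av[ln Z_Λ(J)] ≥ Σ_s P_{B s}`. -/
theorem quenched_pressure_superadditive
    {Λ S : Type*} [Fintype Λ] [DecidableEq Λ] [Fintype S] [Nonempty S]
    (ν : S → ℝ) (hν : ∀ x, 0 < ν x) (hν1 : ∑ x, ν x = 1)
    (Φ : Finset Λ → (Λ → S) → ℝ)
    (hΦloc : ∀ (X : Finset Λ) (σ τ : Λ → S), (∀ i ∈ X, σ i = τ i) → Φ X σ = Φ X τ)
    (Δ : Finset Λ → ℝ)
    (μ : Measure (Finset Λ → ℝ))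
    (hμ : μ = Measure.pi fun X => gaussianReal 0 ⟨Δ X ^ 2, sq_nonneg (Δ X)⟩)
    (n : ℕ) (B : Fin n → Finset Λ)
    (hBne : ∀ s, (B s).Nonempty)
    (hBdisj : ∀ s t, s ≠ t → Disjoint (B s) (B t))
    (hBcover : ∀ i, ∃ s, i ∈ B s) :
    ∑ s : Fin n, ∫ J,
        Real.log (∑ σ : Λ → S, (∏ i, ν (σ i)) *
          Real.exp (∑ X ∈ Finset.univ.filter (· ⊆ B s), J X * Φ X σ)) ∂μ
      ≤ ∫ J,
        Real.log (∑ σ : Λ → S, (∏ i, ν (σ i)) *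
          Real.exp (∑ X, J X * Φ X σ)) ∂μ :=
  quenched_pressure_superadditive_general ν hν hν1 Φ hΦloc Δ μ hμ n B hBdisj
end

section
/- Consider the ferromagnetic nearest-neighbor Ising model on a finite set Λ partitioned into blocks Λ_1,…,Λ_n, with H_Λ(σ) = −Σ_{(n,n')} σ_n σ_{n'}, and the interpolating free energy functional α(t) = log Σ_σ exp(−β[t H_Λ(σ) + (1−t) Σ_s H_{Λ_s}(σ)]) for β > 0. Then dα/dt(t) = β Σ_{(n,n') ∈ C} ω_t(σ_n σ_{n'}), where C is the set of nearest-neighbor cross-block pairs and ω_t is the Gibbs state of the interpolating Hamiltonian; by the first Griffiths inequality each ω_t(σ_n σ_{n'}) ≥ 0, so α is nondecreasing on [0,1] and hence log Z_Λ ≥ Σ_s log Z_{Λ_s}. -/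
open Finset

/-!
With `bondSum E σ = ∑_{(v,w) ∈ E} σ_v σ_w`, the exponent `β (t · bondSum E + (1 - t) · bondSum C)`
(`C` the intra-block bonds) is affine in `t`, so the derivative of `α`, the log of a sum of
exponentials, is the Gibbs average of its slope: `β` times the sum of the cross-block
correlations. For `t ∈ [0, 1]` all couplings are nonnegative, and Griffiths' first inequality
makes these correlations nonnegative: writing `exp (J s) = s sinh J + cosh J` for `s = ±1`
expands a weighted correlation into spin monomials with nonnegative coefficients, and the sum of
a monomial over all configurations is nonnegative. Hence `α` is monotone. At `t = 0` the
Boltzmann weight is a product of factors each depending only on the spins of one block, so the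
partition function factorises into the block partition functions.
-/

def spin (b : Bool) : ℝ := if b then 1 else -1

lemma spin_mul_spin_eq_one_or (b c : Bool) : spin b * spin c = 1 ∨ spin b * spin c = -1 := by
  cases b <;> cases c <;> norm_num [spin]

lemma sum_spin_pow_nonneg (k : ℕ) : 0 ≤ ∑ b : Bool, spin b ^ k := by
  rcases Nat.even_or_odd k with hk | hk <;> simp [spin, hk.neg_one_pow]

lemma sum_spin_moment_nonneg {V : Type*} [Fintype V] [DecidableEq V] (M : Multiset V) :
    0 ≤ ∑ σ : V → Bool, (M.map fun v => spin (σ v)).prod := by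
  have as_prod_univ : ∀ σ : V → Bool,
      (M.map fun v => spin (σ v)).prod = ∏ v, spin (σ v) ^ M.count v := by
    intro σ
    rw [Finset.prod_multiset_map_count]
    refine Finset.prod_subset (Finset.subset_univ _) fun v _ hv => ?_
    rw [Multiset.count_eq_zero_of_notMem (by simpa using hv), pow_zero]
  -- the sum factorises over sites, each factor being `1 + (-1) ^ k`
  simp only [as_prod_univ, ← Fintype.prod_sum fun v b => spin b ^ M.count v]
  exact Finset.prod_nonneg fun v _ => sum_spin_pow_nonneg _

lemma exp_mul_eq_mul_sinh_add_cosh (a : ℝ) {s : ℝ} (hs : s = 1 ∨ s = -1) :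
    Real.exp (a * s) = s * Real.sinh a + Real.cosh a := by
  rcases hs with rfl | rfl
  · rw [mul_one, one_mul, add_comm, Real.cosh_add_sinh]
  · rw [mul_neg_one, ← Real.cosh_sub_sinh]; ring

lemma prod_bond_spins_eq_multiset_prod {V : Type*} (σ : V → Bool) (T : Finset (V × V)) :
    ∏ e ∈ T, spin (σ e.1) * spin (σ e.2)
      = ((T.val.bind fun e => {e.1, e.2}).map fun v => spin (σ v)).prod := by
  rw [Multiset.map_bind, Multiset.prod_bind, Finset.prod_eq_multiset_prod]
  simp

theorem griffiths_first {V : Type*} [Fintype V] [DecidableEq V] (E : Finset (V × V))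
    (J : V × V → ℝ) (hJ : ∀ e ∈ E, 0 ≤ J e) (M : Multiset V) :
    0 ≤ ∑ σ : V → Bool, (M.map fun v => spin (σ v)).prod *
      Real.exp (∑ e ∈ E, J e * (spin (σ e.1) * spin (σ e.2))) := by
  have expand : ∀ σ : V → Bool, Real.exp (∑ e ∈ E, J e * (spin (σ e.1) * spin (σ e.2)))
      = ∑ T ∈ E.powerset, ((∏ e ∈ T, Real.sinh (J e)) * ∏ e ∈ E \ T, Real.cosh (J e)) *
          ∏ e ∈ T, spin (σ e.1) * spin (σ e.2) := by
    intro σ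
    simp only [Real.exp_sum, exp_mul_eq_mul_sinh_add_cosh _ (spin_mul_spin_eq_one_or _ _),
      Finset.prod_add, Finset.prod_mul_distrib]
    exact Finset.sum_congr rfl fun T _ => by ring
  simp only [expand, Finset.mul_sum]
  rw [Finset.sum_comm]
  refine Finset.sum_nonneg fun T hT => ?_
  have hcoeff : 0 ≤ (∏ e ∈ T, Real.sinh (J e)) * ∏ e ∈ E \ T, Real.cosh (J e) :=
    mul_nonneg
      (Finset.prod_nonneg fun e he => Real.sinh_nonneg_iff.2 (hJ e (mem_powerset.1 hT he)))
      (Finset.prod_nonneg fun e _ => (Real.cosh_pos _).le)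
  have hmoment := sum_spin_moment_nonneg (M + T.val.bind fun e => {e.1, e.2})
  simp only [Multiset.map_add, Multiset.prod_add, ← prod_bond_spins_eq_multiset_prod] at hmoment
  calc (0 : ℝ) ≤ _ * _ := mul_nonneg hcoeff hmoment
    _ = _ := by rw [Finset.mul_sum]; exact Finset.sum_congr rfl fun σ _ => by ring

lemma hasDerivAt_log_sum_exp {ι : Type*} [Fintype ι] [Nonempty ι] {H : ι → ℝ → ℝ}
    {H' : ι → ℝ} {t : ℝ} (hH : ∀ i, HasDerivAt (H i) (H' i) t) :
    HasDerivAt (fun u => Real.log (∑ i, Real.exp (H i u)))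
      ((∑ i, Real.exp (H i t) * H' i) / ∑ i, Real.exp (H i t)) t :=
  (HasDerivAt.fun_sum fun i _ => (hH i).exp).log
    (Finset.sum_pos (fun _ _ => Real.exp_pos _) univ_nonempty).ne'

def restrictFibersEquiv {V ι : Type*} (B : V → ι) (α : Type*) :
    (V → α) ≃ ((i : ι) → {v // B v = i} → α) where
  toFun σ _i v := σ v
  invFun τ v := τ (B v) ⟨v, rfl⟩
  left_inv _ := rfl
  right_inv τ := by funext i ⟨v, hv⟩; subst hv; rfl

section Restriction

variable {V α : Type*} [Fintype V] [DecidableEq V] [Fintype α]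

lemma sum_comp_restrict {M : Type*} [AddCommMonoid M] (p : V → Prop) [DecidablePred p]
    (g : ({v // p v} → α) → M) :
    ∑ σ : V → α, g (fun v => σ v) = Fintype.card α ^ Fintype.card {v // ¬p v} • ∑ a, g a := by
  refine (Fintype.sum_equiv (Equiv.piEquivPiSubtypeProd p fun _ => α) _ (fun x => g x.1)
    fun _ => rfl).trans ?_
  simp only [Fintype.sum_prod_type_right, Finset.sum_const, Finset.card_univ, Fintype.card_fun]

lemma sum_prod_comp_restrict_fibers {ι R : Type*} [Fintype ι] [DecidableEq ι] [CommSemiring R]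
    (B : V → ι) (g : (i : ι) → ({v // B v = i} → α) → R) :
    ∑ σ : V → α, ∏ i, g i (fun v => σ v) = ∏ i, ∑ a, g i a := by
  rw [Fintype.prod_sum]
  exact Fintype.sum_equiv (restrictFibersEquiv B α) _ _ fun _ => rfl

theorem prod_sum_div_card_pow_eq_sum_prod [Nonempty α] {ι : Type*} [Fintype ι] [DecidableEq ι]
    (B : V → ι) (f : ι → (V → α) → ℝ)
    (hf : ∀ i σ τ, (∀ v, B v = i → σ v = τ v) → f i σ = f i τ) :
    ∏ i, (∑ σ : V → α, f i σ) / (Fintype.card α : ℝ) ^ #{v | B v ≠ i}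
      = ∑ σ : V → α, ∏ i, f i σ := by
  have hfactor : ∀ i, Function.FactorsThrough (f i) fun (σ : V → α) (v : {v // B v = i}) => σ v :=
    fun i σ τ hστ => hf i σ τ fun v hv => congrFun hστ ⟨v, hv⟩
  set g : (i : ι) → ({v // B v = i} → α) → ℝ := fun i => Function.extend (fun σ v => σ v) (f i) 0
  have hg : ∀ i σ, f i σ = g i fun v => σ v := fun i σ => ((hfactor i).extend_apply 0 σ).symm
  simp only [hg, sum_prod_comp_restrict_fibers, sum_comp_restrict, nsmul_eq_mul,
    Fintype.card_subtype]
  refine Finset.prod_congr rfl fun i _ => ?_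
  push_cast
  exact mul_div_cancel_left₀ _ (pow_ne_zero _ (Nat.cast_ne_zero.2 Fintype.card_ne_zero))

end Restriction

lemma sum_filter_and_fiberwise {X ι M : Type*} [Fintype ι] [DecidableEq ι] [AddCommMonoid M]
    (E : Finset (X × X)) (B : X → ι) (f : X × X → M) :
    ∑ i, ∑ e ∈ E with B e.1 = i ∧ B e.2 = i, f e = ∑ e ∈ E with B e.1 = B e.2, f e := by
  rw [← Finset.sum_fiberwise {e ∈ E | B e.1 = B e.2} (fun e => B e.1) f]
  refine Finset.sum_congr rfl fun i _ => ?_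
  rw [Finset.filter_filter]
  refine Finset.sum_congr (Finset.filter_congr fun e _ => ?_) fun _ _ => rfl
  constructor
  · rintro ⟨h1, h2⟩; exact ⟨h1.trans h2.symm, h1⟩
  · rintro ⟨h12, h1⟩; exact ⟨h1, h12 ▸ h1⟩

section Interpolation

variable {X : Type*} (E : Finset X) (p : X → Prop) [DecidablePred p] (f : X → ℝ)

lemma hasDerivAt_interpolation (β t : ℝ) :
    HasDerivAt (fun u => β * (u * ∑ e ∈ E, f e + (1 - u) * ∑ e ∈ E with p e, f e))
      (β * ∑ e ∈ E with ¬p e, f e) t := by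
  have affine : (fun u => β * (u * ∑ e ∈ E, f e + (1 - u) * ∑ e ∈ E with p e, f e))
      = fun u => (β * ∑ e ∈ E with ¬p e, f e) * u + β * ∑ e ∈ E with p e, f e := by
    funext u
    rw [← Finset.sum_filter_add_sum_filter_not E p]
    ring
  rw [affine]
  simpa using ((hasDerivAt_id t).const_mul (β * ∑ e ∈ E with ¬p e, f e)).add_const
    (β * ∑ e ∈ E with p e, f e)

lemma interpolation_eq_sum_mul (t : ℝ) :
    t * ∑ e ∈ E, f e + (1 - t) * ∑ e ∈ E with p e, f e
      = ∑ e ∈ E, (t + if p e then 1 - t else 0) * f e := by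
  simp only [add_mul, Finset.sum_add_distrib, ite_mul, zero_mul, ← Finset.sum_filter,
    Finset.mul_sum]

end Interpolation

def bondSum {V : Type*} (E : Finset (V × V)) (σ : V → Bool) : ℝ :=
  ∑ e ∈ E, spin (σ e.1) * spin (σ e.2)

section Ising

variable {V : Type*} [Fintype V] [DecidableEq V] (E : Finset (V × V))
  (p : V × V → Prop) [DecidablePred p] (β : ℝ)

lemma hasDerivAt_log_partition_interpolation (t : ℝ) :
    HasDerivAt
      (fun u => Real.log (∑ σ : V → Bool,
        Real.exp (β * (u * bondSum E σ + (1 - u) * bondSum {e ∈ E | p e} σ))))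
      (β * ∑ e ∈ E with ¬p e,
        (∑ σ : V → Bool, spin (σ e.1) * spin (σ e.2) *
          Real.exp (β * (t * bondSum E σ + (1 - t) * bondSum {e ∈ E | p e} σ))) /
        ∑ σ : V → Bool, Real.exp (β * (t * bondSum E σ + (1 - t) * bondSum {e ∈ E | p e} σ)))
      t := by
  convert hasDerivAt_log_sum_exp
    (H := fun σ u => β * (u * bondSum E σ + (1 - u) * bondSum {e ∈ E | p e} σ))
    (fun σ => hasDerivAt_interpolation E p _ β t) using 1
  simp only [Finset.mul_sum, Finset.sum_div]
  rw [Finset.sum_comm]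
  exact Finset.sum_congr rfl fun _ _ => Finset.sum_congr rfl fun _ _ => by ring

lemma correlation_interpolation_nonneg (hβ : 0 ≤ β) {t : ℝ} (ht : t ∈ Set.Icc (0 : ℝ) 1)
    (x y : V) :
    0 ≤ ∑ σ : V → Bool, spin (σ x) * spin (σ y) *
      Real.exp (β * (t * bondSum E σ + (1 - t) * bondSum {e ∈ E | p e} σ)) := by
  have := griffiths_first E (fun e => β * (t + if p e then 1 - t else 0))
    (fun e _ => mul_nonneg hβ (add_nonneg ht.1 (by split_ifs <;> linarith [ht.2]))) {x, y}
  simp_rw [bondSum, interpolation_eq_sum_mul, Finset.mul_sum, ← mul_assoc]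
  simpa [mul_assoc] using this

lemma prod_block_partition_eq {ι : Type*} [Fintype ι] [DecidableEq ι] (B : V → ι) :
    ∏ i, (∑ σ : V → Bool, Real.exp (β * bondSum {e ∈ E | B e.1 = i ∧ B e.2 = i} σ)) /
        2 ^ #{v | B v ≠ i}
      = ∑ σ : V → Bool, Real.exp (β * bondSum {e ∈ E | B e.1 = B e.2} σ) := by
  have hlocal : ∀ i (σ τ : V → Bool), (∀ v, B v = i → σ v = τ v) →
      Real.exp (β * bondSum {e ∈ E | B e.1 = i ∧ B e.2 = i} σ)
        = Real.exp (β * bondSum {e ∈ E | B e.1 = i ∧ B e.2 = i} τ) := by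
    intro i σ τ hστ
    refine congrArg (fun x => Real.exp (β * x)) (Finset.sum_congr rfl fun e he => ?_)
    obtain ⟨-, h1, h2⟩ := Finset.mem_filter.1 he
    rw [hστ e.1 h1, hστ e.2 h2]
  have hfactor := prod_sum_div_card_pow_eq_sum_prod B _ hlocal
  rw [Fintype.card_bool, Nat.cast_ofNat] at hfactor
  rw [hfactor]
  simp only [← Real.exp_sum, ← Finset.mul_sum, bondSum, sum_filter_and_fiberwise]

end Ising

/-- Ferromagnetic interpolation for the nearest-neighbor Ising model: the derivative of the
interpolating free energy functional `α(t)` is `β Σ_{(n,n') ∈ C} ω_t(σ_n σ_{n'})` over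
cross-block bonds `C`; each such Gibbs correlation is nonnegative by Griffiths' first
inequality, so `α` is nondecreasing on `[0,1]` and `log Z_Λ ≥ Σ_s log Z_{Λ_s}`. -/
theorem ising_interpolation_monotone
    {V : Type*} [Fintype V] [DecidableEq V] {n : ℕ}
    (E : Finset (V × V)) (B : V → Fin n) (β : ℝ) (hβ : 0 < β)
    (sp : (V → Bool) → V → ℝ) (hsp : ∀ σ v, sp σ v = if σ v then 1 else -1)
    (Ht : ℝ → (V → Bool) → ℝ)
    (hHt : ∀ t σ, Ht t σ = t * ∑ e ∈ E, sp σ e.1 * sp σ e.2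
      + (1 - t) * ∑ e ∈ E.filter (fun e => B e.1 = B e.2), sp σ e.1 * sp σ e.2)
    (α : ℝ → ℝ) (hα : ∀ t, α t = Real.log (∑ σ : V → Bool, Real.exp (β * Ht t σ)))
    (ω : ℝ → V × V → ℝ)
    (hω : ∀ t e, ω t e = (∑ σ : V → Bool, sp σ e.1 * sp σ e.2 * Real.exp (β * Ht t σ))
      / (∑ σ : V → Bool, Real.exp (β * Ht t σ)))
    (Zblock : Fin n → ℝ)
    (hZ : ∀ s, Zblock s = (∑ σ : V → Bool, Real.exp
        (β * ∑ e ∈ E.filter (fun e => B e.1 = s ∧ B e.2 = s), sp σ e.1 * sp σ e.2))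
      / 2 ^ (Finset.univ.filter (fun v => B v ≠ s)).card) :
    (∀ t : ℝ, HasDerivAt α (β * ∑ e ∈ E.filter (fun e => B e.1 ≠ B e.2), ω t e) t) ∧
    (∀ t ∈ Set.Icc (0 : ℝ) 1, ∀ e ∈ E.filter (fun e => B e.1 ≠ B e.2), 0 ≤ ω t e) ∧
    MonotoneOn α (Set.Icc (0 : ℝ) 1) ∧
    ∑ s : Fin n, Real.log (Zblock s) ≤ α 1 := by
  obtain rfl : sp = fun σ v => spin (σ v) := funext fun σ => funext (hsp σ)
  obtain rfl : Ht = _ := funext fun t => funext (hHt t)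
  have hderiv : ∀ t, HasDerivAt α (β * ∑ e ∈ E with B e.1 ≠ B e.2, ω t e) t := fun t => by
    rw [funext hα]
    simp only [hω]
    exact hasDerivAt_log_partition_interpolation E (fun e => B e.1 = B e.2) β t
  have hcorr : ∀ t ∈ Set.Icc (0 : ℝ) 1, ∀ e : V × V, 0 ≤ ω t e := fun t ht e =>
    hω t e ▸ div_nonneg (correlation_interpolation_nonneg E _ β hβ.le ht e.1 e.2)
      (Finset.sum_pos (fun _ _ => Real.exp_pos _) univ_nonempty).le
  have hmono : MonotoneOn α (Set.Icc 0 1) :=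
    monotoneOn_of_hasDerivWithinAt_nonneg (convex_Icc 0 1)
      (fun t _ => (hderiv t).continuousAt.continuousWithinAt)
      (fun t _ => (hderiv t).hasDerivWithinAt)
      fun t ht => mul_nonneg hβ.le (Finset.sum_nonneg fun e _ => hcorr t (interior_subset ht) e)
  have hblocks : ∑ s, Real.log (Zblock s) = α 0 := by
    have hZblock_pos : ∀ s, 0 < Zblock s := fun s => by rw [hZ]; positivity
    rw [← Real.log_prod fun s _ => (hZblock_pos s).ne', Finset.prod_congr rfl fun s _ => hZ s, hα]
    simp only [zero_mul, sub_zero, one_mul, zero_add]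
    exact congrArg Real.log (prod_block_partition_eq E β B)
  exact ⟨hderiv, fun t ht e _ => hcorr t ht e, hmono,
    hblocks ▸ hmono ⟨le_rfl, zero_le_one⟩ ⟨zero_le_one, le_rfl⟩ zero_le_one⟩
end
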